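/- arXiv:2408.10610 — 3 statements merged into one kernel-verified Lean document; each statement's English description precedes it below -/
import Mathlib

section
/- Let S be the unilateral shift operator on ℓ²(ℕ, ℂ), defined by (S a)(0) = 0 and (S a)(n) = a(n−1) for n ≥ 1. For every complex polynomial p, the operator norm of p(S) equals the sup norm of p on the unit circle: ‖p(S)‖ = sup_{z ∈ ℂ, |z| = 1} |p(z)|. -/
/-!
The bilateral shift `U` on `ℓ²(ℤ)` is unitary, so `p(U)` is a normal element of a C⋆-algebra
whose spectrum lies in `p(𝕋)`; hence `‖p(U)‖ ≤ sup_𝕋 |p|`. Extending sequences by zero embeds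
`ℓ²(ℕ)` isometrically into `ℓ²(ℤ)` and intertwines `S` with `U`, which gives
`‖p(S)‖ ≤ ‖p(U)‖`. Conversely, for `|c| < 1` the geometric sequence `(c^n)` is an eigenvector
of `S†` with eigenvalue `c` and is orthogonal to the range of `S - c̄`, so the open unit disc,
and by closedness the circle, lies in the spectrum of `S`; spectral mapping then gives
`|p(z)| ≤ ‖p(S)‖` for `|z| = 1`.
-/

open Metric Polynomial Function
open scoped ENNReal ComplexConjugate lp

section ExtendZero

variable {𝕜 α β E : Type*} [NormedField 𝕜] [NormedAddCommGroup E] [NormedSpace 𝕜 E]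
  {p : ℝ≥0∞} {f : α → β}

theorem norm_rpow_extend_zero (hp : 0 < p.toReal) (g : α → E) (b : β) :
    ‖extend f g 0 b‖ ^ p.toReal = extend f (fun a => ‖g a‖ ^ p.toReal) 0 b := by
  rw [apply_extend (fun x : E => ‖x‖ ^ p.toReal)]
  simp [comp_def, Real.zero_rpow hp.ne', Pi.zero_def]

theorem Memℓp.extend_zero (hf : Injective f) (hp : 0 < p.toReal) {g : α → E} (hg : Memℓp g p) :
    Memℓp (extend f g 0) p := by
  rw [memℓp_gen_iff hp] at hg ⊢
  simpa only [norm_rpow_extend_zero hp] using (summable_extend_zero hf).2 hg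

variable [Fact (1 ≤ p)]

variable (𝕜 E) in
noncomputable def lp.extendZero (hf : Injective f) (hp : 0 < p.toReal) :
    lp (fun _ : α => E) p →ₗᵢ[𝕜] lp (fun _ : β => E) p where
  toFun g := ⟨extend f g 0, (lp.memℓp g).extend_zero hf hp⟩
  map_add' g h := by
    ext b
    change extend f (⇑(g + h)) 0 b = extend f g 0 b + extend f h 0 b
    rw [lp.coeFn_add, ← Pi.add_apply (extend f g 0), ← extend_add, add_zero]
  map_smul' c g := by
    ext b
    simpa using congrFun (extend_smul c f g (0 : β → E)) b
  norm_map' g := by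
    rw [lp.norm_eq_tsum_rpow hp, lp.norm_eq_tsum_rpow hp]
    change (∑' b, ‖extend f g 0 b‖ ^ p.toReal) ^ _ = _
    simp only [norm_rpow_extend_zero hp, tsum_extend_zero hf]

@[simp]
theorem lp.extendZero_apply (hf : Injective f) (hp : 0 < p.toReal) (g : lp (fun _ : α => E) p)
    (b : β) : (lp.extendZero 𝕜 E hf hp g : β → E) b = extend f g 0 b :=
  rfl

variable (𝕜 E) in
noncomputable def lp.reindex (e : α ≃ β) (hp : 0 < p.toReal) :
    lp (fun _ : α => E) p ≃ₗᵢ[𝕜] lp (fun _ : β => E) p :=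
  { lp.extendZero 𝕜 E e.injective hp with
    invFun := lp.extendZero 𝕜 E e.symm.injective hp
    left_inv := fun g => by ext a; simp
    right_inv := fun g => by ext b; simp }

@[simp]
theorem lp.reindex_apply (e : α ≃ β) (hp : 0 < p.toReal) (g : lp (fun _ : α => E) p) (b : β) :
    (lp.reindex 𝕜 E e hp g : β → E) b = g (e.symm b) := by
  simp [lp.reindex]

end ExtendZero

theorem norm_aeval_le_of_mem_unitary {A : Type*} [CStarAlgebra A] {u : A} (hu : u ∈ unitary A)
    (q : ℂ[X]) {c : ℝ} (hc : 0 ≤ c) (h : ∀ z ∈ sphere (0 : ℂ) 1, ‖q.eval z‖ ≤ c) :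
    ‖aeval u q‖ ≤ c := by
  rw [← cfc_polynomial q u]
  exact norm_cfc_le hc fun z hz => h z (spectrum.subset_circle_of_unitary hu hz)

section Intertwining

variable {𝕜 E F : Type*} [NontriviallyNormedField 𝕜] [NormedAddCommGroup E] [NormedSpace 𝕜 E]
  [NormedAddCommGroup F] [NormedSpace 𝕜 F] {J : E →ₗᵢ[𝕜] F} {S : E →L[𝕜] E} {T : F →L[𝕜] F}

theorem aeval_apply_of_intertwines (h : ∀ x, T (J x) = J (S x)) (q : 𝕜[X]) (x : E) :
    aeval T q (J x) = J (aeval S q x) := by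
  induction q using Polynomial.induction_on generalizing x with
  | C a => simp [Algebra.algebraMap_eq_smul_one]
  | add q r hq hr => simp [hq, hr]
  | monomial n a ih =>
    rw [pow_succ, ← mul_assoc, map_mul (aeval T), map_mul (aeval S), aeval_X, aeval_X,
      mul_apply_eq_comp, mul_apply_eq_comp, h, ih]

theorem norm_aeval_le_of_intertwines (h : ∀ x, T (J x) = J (S x)) (q : 𝕜[X]) :
    ‖aeval S q‖ ≤ ‖aeval T q‖ := by
  refine ContinuousLinearMap.opNorm_le_bound _ (norm_nonneg _) fun x => ?_
  calc ‖aeval S q x‖ = ‖aeval T q (J x)‖ := by rw [aeval_apply_of_intertwines h, J.norm_map]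
    _ ≤ ‖aeval T q‖ * ‖x‖ := by simpa only [J.norm_map] using (aeval T q).le_opNorm (J x)

end Intertwining

noncomputable def bilateralShift : unitary (ℓ²(ℤ, ℂ) →L[ℂ] ℓ²(ℤ, ℂ)) :=
  Unitary.linearIsometryEquiv.symm (lp.reindex ℂ ℂ (Equiv.addRight 1) (by norm_num))

theorem bilateralShift_apply (g : ℓ²(ℤ, ℂ)) (m : ℤ) :
    ((bilateralShift : ℓ²(ℤ, ℂ) →L[ℂ] ℓ²(ℤ, ℂ)) g : ℤ → ℂ) m = g (m - 1) := by
  simp [bilateralShift, sub_eq_add_neg]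

noncomputable def extendZeroToInt : ℓ²(ℕ, ℂ) →ₗᵢ[ℂ] ℓ²(ℤ, ℂ) :=
  lp.extendZero ℂ ℂ Nat.cast_injective (by norm_num)

theorem extendZeroToInt_apply_natCast (x : ℓ²(ℕ, ℂ)) (n : ℕ) :
    (extendZeroToInt x : ℤ → ℂ) n = x n :=
  Nat.cast_injective.extend_apply _ _ n

theorem extendZeroToInt_apply_negSucc (x : ℓ²(ℕ, ℂ)) (n : ℕ) :
    (extendZeroToInt x : ℤ → ℂ) (Int.negSucc n) = 0 :=
  extend_apply' _ _ _ (by omega)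

instance lp.nontrivial {α E : Type*} [NormedAddCommGroup E] {p : ℝ≥0∞} [Nonempty α]
    [Nontrivial E] : Nontrivial (lp (fun _ : α => E) p) := by
  obtain ⟨e, he⟩ := exists_ne (0 : E)
  inhabit α
  classical
  exact nontrivial_of_ne (lp.single p default e) 0 fun h => he <| by
    simpa using congr(($h : α → E) default)

theorem memℓp_two_geom {c : ℂ} (hc : ‖c‖ < 1) : Memℓp (fun n : ℕ => c ^ n) 2 := by
  refine memℓp_gen_iff (by norm_num) |>.2 ?_
  have hc2 : ‖c‖ ^ 2 < 1 := pow_lt_one₀ (norm_nonneg c) hc two_ne_zero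
  convert summable_geometric_of_lt_one (by positivity) hc2 using 2 with n
  rw [norm_pow, ENNReal.toReal_ofNat, Real.rpow_two, ← pow_mul, ← pow_mul, mul_comm]

noncomputable def geomSeq (c : ℂ) (hc : ‖c‖ < 1) : ℓ²(ℕ, ℂ) := ⟨fun n => c ^ n, memℓp_two_geom hc⟩

section UnilateralShift

variable {S : ℓ²(ℕ, ℂ) →L[ℂ] ℓ²(ℕ, ℂ)}
  (hS : ∀ (a : ℓ²(ℕ, ℂ)) (n : ℕ), (S a : ℕ → ℂ) n = if n = 0 then 0 else a (n - 1))
include hS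

theorem bilateralShift_extendZeroToInt (x : ℓ²(ℕ, ℂ)) :
    (bilateralShift : ℓ²(ℤ, ℂ) →L[ℂ] ℓ²(ℤ, ℂ)) (extendZeroToInt x) = extendZeroToInt (S x) := by
  ext m
  rw [bilateralShift_apply]
  rcases m with (_ | n) | n
  · change (extendZeroToInt x : ℤ → ℂ) (Int.negSucc 0) = (extendZeroToInt (S x) : ℤ → ℂ) (0 : ℕ)
    rw [extendZeroToInt_apply_negSucc, extendZeroToInt_apply_natCast, hS, if_pos rfl]
  · rw [show Int.ofNat (n + 1) = (n + 1 : ℕ) from rfl, show ((n + 1 : ℕ) : ℤ) - 1 = n by omega]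
    rw [extendZeroToInt_apply_natCast, extendZeroToInt_apply_natCast, hS, if_neg n.succ_ne_zero,
      Nat.add_sub_cancel]
  · change (extendZeroToInt x : ℤ → ℂ) (Int.negSucc (n + 1)) = _
    rw [extendZeroToInt_apply_negSucc, extendZeroToInt_apply_negSucc]

theorem inner_geomSeq_shift {c : ℂ} (hc : ‖c‖ < 1) (x : ℓ²(ℕ, ℂ)) :
    inner ℂ (geomSeq c hc) (S x) = conj c * inner ℂ (geomSeq c hc) x := by
  rw [lp.inner_eq_tsum _ (S x), lp.inner_eq_tsum _ x,
    (lp.summable_inner (𝕜 := ℂ) (geomSeq c hc) (S x)).tsum_eq_zero_add, ← tsum_mul_left]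
  simp only [hS, if_pos, Nat.succ_ne_zero, if_false, Nat.add_sub_cancel, inner_zero_right, zero_add]
  congr 1 with n
  simp [geomSeq, RCLike.inner_apply, pow_succ]
  ring

theorem ball_subset_spectrum_shift : ball (0 : ℂ) 1 ⊆ spectrum ℂ S := by
  intro z hz
  have hz' : ‖conj z‖ < 1 := by rwa [RCLike.norm_conj, ← mem_ball_zero_iff]
  set v := geomSeq (conj z) hz'
  have h_range : ∀ x, inner ℂ v ((algebraMap ℂ _ z - S) x) = 0 := fun x => by
    rw [sub_apply, inner_sub_right, inner_geomSeq_shift hS hz', Algebra.algebraMap_eq_smul_one,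
      smul_apply, one_apply_eq_self, inner_smul_right, RCLike.conj_conj, sub_self]
  have h_single : inner ℂ v (lp.single 2 0 1) = 1 := by simp [v, lp.inner_single_right, geomSeq]
  rw [spectrum.mem_iff, ContinuousLinearMap.isUnit_iff_bijective]
  rintro ⟨-, hsurj⟩
  obtain ⟨x, hx⟩ := hsurj (lp.single 2 0 1)
  exact one_ne_zero (h_single.symm.trans (hx ▸ h_range x))

theorem sphere_subset_spectrum_shift : sphere (0 : ℂ) 1 ⊆ spectrum ℂ S :=
  calc sphere (0 : ℂ) 1 ⊆ closedBall 0 1 := sphere_subset_closedBall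
    _ = closure (ball 0 1) := (closure_ball 0 one_ne_zero).symm
    _ ⊆ spectrum ℂ S := closure_minimal (ball_subset_spectrum_shift hS) (spectrum.isClosed S)

end UnilateralShift

/-- For the unilateral shift `S` on `ℓ²(ℕ, ℂ)` (`(S a)(0) = 0`,
`(S a)(n) = a(n−1)` for `n ≥ 1`) and every complex polynomial `p`, the operator norm of
`p(S)` equals the sup norm of `p` on the unit circle. -/
theorem unilateral_shift_polynomial_norm_eq_supnorm_on_circle
    (S : lp (fun _ : ℕ => ℂ) 2 →L[ℂ] lp (fun _ : ℕ => ℂ) 2)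
    (hS : ∀ (a : lp (fun _ : ℕ => ℂ) 2) (n : ℕ),
      (S a : ∀ _ : ℕ, ℂ) n = if n = 0 then 0 else a (n - 1))
    (p : Polynomial ℂ) :
    ‖Polynomial.aeval S p‖ = ⨆ z : sphere (0 : ℂ) 1, ‖p.eval (z : ℂ)‖ := by
  have hbdd : BddAbove (Set.range fun z : sphere (0 : ℂ) 1 => ‖p.eval (z : ℂ)‖) :=
    (isCompact_range (by fun_prop)).bddAbove
  refine le_antisymm ?_ (ciSup_le fun z => ?_)
  · calc ‖aeval S p‖ ≤ ‖aeval (bilateralShift : ℓ²(ℤ, ℂ) →L[ℂ] ℓ²(ℤ, ℂ)) p‖ :=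
          norm_aeval_le_of_intertwines (bilateralShift_extendZeroToInt hS) p
      _ ≤ ⨆ z : sphere (0 : ℂ) 1, ‖p.eval (z : ℂ)‖ :=
          norm_aeval_le_of_mem_unitary bilateralShift.prop p
            (Real.iSup_nonneg fun _ => norm_nonneg _) fun z hz => le_ciSup hbdd ⟨z, hz⟩
  · exact spectrum.norm_le_norm_of_mem
      (spectrum.subset_polynomial_aeval S p ⟨z, sphere_subset_spectrum_shift hS z.2, rfl⟩)
end

section
/- Let f be a bounded holomorphic function on the open unit disk 𝔻 with Taylor coefficients (x_n)_{n≥0}, and let a ∈ ℓ²(ℕ, ℂ). Then the Cauchy-product sequence b defined by b(n) = ∑_{k=0}^n x_k · a(n−k) is in ℓ²(ℕ, ℂ) and ‖b‖_{ℓ²} ≤ (sup_{z∈𝔻} |f(z)|) · ‖a‖_{ℓ²}. Consequently f(L) is a well-defined bounded linear operator (of norm at most sup_{z∈𝔻}|f(z)|) on the space of past innovations, for every H∞ transfer function f. -/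
/-!
For `0 < r < 1` put `F(t) = ∑ rⁿ xₙ e(nt)` and `G(t) = ∑ rⁿ aₙ e(nt)` on the circle. Both series
converge absolutely, `F(t) = f(r e(t))` so `|F| ≤ sup_𝔻 |f|`, and by the Cauchy product formula the
`n`-th Fourier coefficient of `F G` is `rⁿ bₙ`. Parseval then gives
`∑ r²ⁿ |bₙ|² = ∫ |F G|² ≤ (sup_𝔻 |f|)² ∫ |G|² = (sup_𝔻 |f|)² ∑ r²ⁿ |aₙ|² ≤ (sup_𝔻 |f|)² ‖a‖²`,
and letting `r → 1` in every partial sum yields the bound for `b`.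
-/

open Metric MeasureTheory AddCircle Finset

def cauchyProduct {R : Type*} [Semiring R] (x y : ℕ → R) (n : ℕ) : R :=
  ∑ k ∈ range (n + 1), x k * y (n - k)

theorem cauchyProduct_pow_smul {R A : Type*} [CommSemiring R] [Semiring A] [Algebra R A]
    (r : R) (x y : ℕ → A) (n : ℕ) :
    cauchyProduct (fun k => r ^ k • x k) (fun k => r ^ k • y k) n = r ^ n • cauchyProduct x y n := by
  rw [cauchyProduct, cauchyProduct, smul_sum]
  refine sum_congr rfl fun k hk => ?_
  rw [smul_mul_smul_comm, ← pow_add, Nat.add_sub_cancel' (Nat.lt_succ_iff.mp (mem_range.mp hk))]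

section FourierSeries

variable {T : ℝ}

theorem fourier_mul_fourier (m n : ℤ) :
    (fourier m * fourier n : C(AddCircle T, ℂ)) = fourier (m + n) := by
  ext t
  rw [ContinuousMap.mul_apply, fourier_add]

theorem fourier_natCast_apply (n : ℕ) (t : AddCircle T) : fourier n t = fourier 1 t ^ n := by
  rw [fourier_apply, fourier_one, natCast_zsmul, toCircle_nsmul, Circle.coe_pow]

variable [Fact (0 < T)]

theorem summable_norm_smul_fourier {c : ℕ → ℂ} (hc : Summable (‖c ·‖)) :
    Summable (fun n : ℕ => ‖c n • (fourier n : C(AddCircle T, ℂ))‖) := by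
  simpa only [norm_smul, fourier_norm, mul_one] using hc

theorem hasSum_tsum_smul_fourier {c : ℕ → ℂ} (hc : Summable (‖c ·‖)) :
    HasSum (fun n : ℕ => c n • fourier (n : ℤ))
      (∑' n : ℕ, c n • fourier (n : ℤ) : C(AddCircle T, ℂ)) :=
  Summable.hasSum (Summable.of_norm (summable_norm_smul_fourier hc))

theorem tsum_pow_smul_smul_fourier_apply {x : ℕ → ℂ} {r : ℝ} {g : ℂ}
    (hxr : Summable (fun n => ‖r ^ n • x n‖)) (t : AddCircle T)
    (hx : HasSum (fun n => x n * ((r : ℂ) * fourier 1 t) ^ n) g) :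
    (∑' n : ℕ, (r ^ n • x n) • fourier (n : ℤ) : C(AddCircle T, ℂ)) t = g := by
  have term (n : ℕ) : ((r ^ n • x n) • fourier (n : ℤ) : C(AddCircle T, ℂ)) t =
      x n * ((r : ℂ) * fourier 1 t) ^ n := by
    rw [ContinuousMap.smul_apply, smul_eq_mul, fourier_natCast_apply, Complex.real_smul,
      Complex.ofReal_pow, mul_pow]
    ring
  have hsum := ContinuousMap.hasSum_apply (hasSum_tsum_smul_fourier hxr) t
  simp only [term] at hsum
  exact hsum.unique hx

theorem hasSum_cauchyProduct_smul_fourier {c d : ℕ → ℂ} (hc : Summable (‖c ·‖))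
    (hd : Summable (‖d ·‖)) :
    HasSum (fun n : ℕ => cauchyProduct c d n • fourier (n : ℤ))
      ((∑' n : ℕ, c n • fourier (n : ℤ)) * ∑' n : ℕ, d n • fourier (n : ℤ) : C(AddCircle T, ℂ)) := by
  have term (n : ℕ) : ∑ k ∈ range (n + 1), c k • (fourier k : C(AddCircle T, ℂ)) *
      d (n - k) • fourier ↑(n - k) = cauchyProduct c d n • fourier n := by
    rw [cauchyProduct, sum_smul]
    refine sum_congr rfl fun k hk => ?_
    rw [smul_mul_smul_comm, fourier_mul_fourier, ← Nat.cast_add,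
      Nat.add_sub_cancel' (Nat.lt_succ_iff.mp (mem_range.mp hk))]
  have key := hasSum_sum_range_mul_of_summable_norm (summable_norm_smul_fourier (T := T) hc)
    (summable_norm_smul_fourier hd)
  simpa only [term] using key

theorem fourierCoeff_eq_of_hasSum {c : ℤ → ℂ} {F : C(AddCircle T, ℂ)}
    (hF : HasSum (fun n => c n • fourier n) F) : fourierCoeff F = c := by
  ext m
  let coeff : C(AddCircle T, ℂ) →L[ℂ] ℂ := lp.evalCLM ℂ _ 2 m ∘L
    fourierBasis.repr.toContinuousLinearEquiv.toContinuousLinearMap ∘L ContinuousMap.toLp 2 haarAddCircle ℂ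
  have coeff_apply (g : C(AddCircle T, ℂ)) : coeff g = fourierCoeff g m := by
    change fourierBasis.repr _ m = _
    rw [fourierBasis_repr]
    exact fourierCoeff_toLp g m
  have := coeff.hasSum hF
  simp only [map_smul] at this
  simp only [coeff_apply, fourierCoeff_fourier, smul_eq_mul] at this
  rw [this.unique (hasSum_single m fun n hn => by simp [Ne.symm hn])]
  simp

theorem hasSum_norm_sq_of_hasSum_fourier {c : ℤ → ℂ} {F : C(AddCircle T, ℂ)}
    (hF : HasSum (fun n => c n • fourier n) F) :
    HasSum (fun n => ‖c n‖ ^ 2) (∫ t, ‖F t‖ ^ 2 ∂haarAddCircle) := by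
  have parseval := hasSum_sq_fourierCoeff (ContinuousMap.toLp 2 haarAddCircle ℂ F)
  simp only [fun n => fourierCoeff_toLp F n, fourierCoeff_eq_of_hasSum hF] at parseval
  convert parseval using 1
  refine integral_congr_ae ?_
  filter_upwards [ContinuousMap.coeFn_toLp (p := 2) (𝕜 := ℂ) haarAddCircle F] with t ht
  rw [ht]

theorem hasSum_norm_sq_of_hasSum_fourier_natCast {c : ℕ → ℂ} {F : C(AddCircle T, ℂ)}
    (hF : HasSum (fun n : ℕ => c n • fourier (n : ℤ)) F) :
    HasSum (fun n => ‖c n‖ ^ 2) (∫ t, ‖F t‖ ^ 2 ∂haarAddCircle) := by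
  let c' := Function.extend ((↑) : ℕ → ℤ) c 0
  have hc' (n : ℕ) : c' n = c n := Nat.cast_injective.extend_apply c 0 n
  have hc'_zero (m : ℤ) (hm : m ∉ Set.range ((↑) : ℕ → ℤ)) : c' m = 0 := by
    simp only [c', Function.extend_apply' _ _ _ hm, Pi.zero_apply]
  have hF' : HasSum (fun m => c' m • fourier m) F := by
    refine (Nat.cast_injective.hasSum_iff fun m hm => by simp [hc'_zero m hm]).mp ?_
    simpa only [Function.comp_def, hc'] using hF
  simpa only [Function.comp_def, hc'] using
    (Nat.cast_injective.hasSum_iff fun m hm => by simp [hc'_zero m hm]).mpr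
      (hasSum_norm_sq_of_hasSum_fourier hF')

end FourierSeries

theorem lp.hasSum_norm_sq {α : Type*} {E : α → Type*} [∀ i, NormedAddCommGroup (E i)]
    (f : lp E 2) : HasSum (fun i => ‖f i‖ ^ 2) (‖f‖ ^ 2) := by
  apply_mod_cast lp.hasSum_norm (p := 2) (by norm_num) f

theorem summable_and_tsum_le_of_sum_range_pow_smul_le {E : Type*} [SeminormedAddCommGroup E]
    [NormedSpace ℝ E] {b : ℕ → E} {K : ℝ}
    (h : ∀ r ∈ Set.Ioo (0 : ℝ) 1, ∀ N, ∑ n ∈ range N, ‖r ^ n • b n‖ ^ 2 ≤ K) :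
    Summable (fun n => ‖b n‖ ^ 2) ∧ ∑' n, ‖b n‖ ^ 2 ≤ K := by
  have partial_le (N : ℕ) : ∑ n ∈ range N, ‖b n‖ ^ 2 ≤ K := by
    simpa using le_on_closure (h · · N) (by fun_prop) continuousOn_const
      (by simp [closure_Ioo zero_ne_one] : (1 : ℝ) ∈ closure (Set.Ioo 0 1))
  have hsum := summable_of_sum_range_le (fun n => sq_nonneg _) partial_le
  exact ⟨hsum, hsum.tsum_le_of_sum_range_le partial_le⟩

theorem integral_norm_mul_sq_le {X R : Type*} [TopologicalSpace X] [CompactSpace X]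
    [MeasurableSpace X] [OpensMeasurableSpace X] {μ : Measure X} [IsFiniteMeasureOnCompacts μ]
    [NormedRing R] {F G : C(X, R)} {M : ℝ} (hF : ∀ t, ‖F t‖ ≤ M) :
    ∫ t, ‖(F * G) t‖ ^ 2 ∂μ ≤ M ^ 2 * ∫ t, ‖G t‖ ^ 2 ∂μ := by
  rw [← integral_const_mul]
  refine integral_mono_of_nonneg (.of_forall fun _ => sq_nonneg _)
    (Continuous.integrable_of_hasCompactSupport (by fun_prop) (.of_compactSpace _))
    (.of_forall fun t => ?_)
  calc ‖(F * G) t‖ ^ 2 ≤ (‖F t‖ * ‖G t‖) ^ 2 := by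
        gcongr
        exact norm_mul_le _ _
    _ ≤ (M * ‖G t‖) ^ 2 := by gcongr; exact hF t
    _ = M ^ 2 * ‖G t‖ ^ 2 := mul_pow _ _ _

theorem sum_range_norm_sq_pow_smul_cauchyProduct_le {f : ℂ → ℂ} {x : ℕ → ℂ} {M : ℝ}
    (hfM : ∀ z ∈ ball (0 : ℂ) 1, ‖f z‖ ≤ M)
    (hx : ∀ z ∈ ball (0 : ℂ) 1, HasSum (fun n => x n * z ^ n) (f z))
    (a : lp (fun _ : ℕ => ℂ) 2) {r : ℝ} (hr : r ∈ Set.Ioo 0 1) (N : ℕ) :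
    ∑ n ∈ range N, ‖r ^ n • cauchyProduct x a n‖ ^ 2 ≤ M ^ 2 * ‖a‖ ^ 2 := by
  have : Fact ((0 : ℝ) < 1) := ⟨one_pos⟩
  have norm_pow_smul (n : ℕ) (z : ℂ) : ‖r ^ n • z‖ = r ^ n * ‖z‖ := by
    rw [norm_smul, norm_pow, Real.norm_of_nonneg hr.1.le]
  have hball {z : ℂ} (hz : ‖z‖ ≤ 1) : (r : ℂ) * z ∈ ball (0 : ℂ) 1 := by
    rw [mem_ball_zero_iff, norm_mul, Complex.norm_of_nonneg hr.1.le]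
    exact (mul_le_of_le_one_right hr.1.le hz).trans_lt hr.2
  have hxr : Summable (fun n => ‖r ^ n • x n‖) := by
    refine summable_norm_iff.mpr ((hx r (by simpa using hball (z := 1) (by simp))).summable.congr
      fun n => ?_)
    rw [Complex.real_smul, Complex.ofReal_pow, mul_comm]
  have har : Summable (fun n => ‖r ^ n • a n‖) := by
    refine .of_nonneg_of_le (fun _ => norm_nonneg _) (fun n => ?_)
      ((summable_geometric_of_lt_one hr.1.le hr.2).mul_left ‖a‖)
    rw [norm_pow_smul, mul_comm]
    exact mul_le_mul_of_nonneg_right (lp.norm_apply_le_norm two_ne_zero a n) (pow_nonneg hr.1.le n)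
  set F : C(AddCircle (1 : ℝ), ℂ) := ∑' n : ℕ, (r ^ n • x n) • fourier (n : ℤ)
  set G : C(AddCircle (1 : ℝ), ℂ) := ∑' n : ℕ, (r ^ n • a n) • fourier (n : ℤ)
  have hF_le (t : AddCircle (1 : ℝ)) : ‖F t‖ ≤ M := by
    have hz := hball (z := fourier 1 t) (by simp [Circle.norm_coe])
    rw [tsum_pow_smul_smul_fourier_apply hxr t (hx _ hz)]
    exact hfM _ hz
  have hG_le : ∫ t, ‖G t‖ ^ 2 ∂haarAddCircle ≤ ‖a‖ ^ 2 := by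
    refine hasSum_le (fun n => ?_) (hasSum_norm_sq_of_hasSum_fourier_natCast
      (hasSum_tsum_smul_fourier har)) (lp.hasSum_norm_sq a)
    rw [norm_pow_smul]
    exact pow_le_pow_left₀ (mul_nonneg (pow_nonneg hr.1.le n) (norm_nonneg _))
      (mul_le_of_le_one_left (norm_nonneg _) (pow_le_one₀ hr.1.le hr.2.le)) 2
  have hFG := hasSum_norm_sq_of_hasSum_fourier_natCast
    (hasSum_cauchyProduct_smul_fourier (T := 1) hxr har)
  simp only [cauchyProduct_pow_smul] at hFG
  calc ∑ n ∈ range N, ‖r ^ n • cauchyProduct x a n‖ ^ 2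
      ≤ ∫ t, ‖(F * G) t‖ ^ 2 ∂haarAddCircle := sum_le_hasSum _ (fun _ _ => sq_nonneg _) hFG
    _ ≤ M ^ 2 * ∫ t, ‖G t‖ ^ 2 ∂haarAddCircle := integral_norm_mul_sq_le hF_le
    _ ≤ M ^ 2 * ‖a‖ ^ 2 := by gcongr

theorem cauchy_product_with_Hinfty_coeffs_bounded_general
    (f : ℂ → ℂ) (x : ℕ → ℂ)
    (hfb : ∃ C : ℝ, ∀ z ∈ ball (0 : ℂ) 1, ‖f z‖ ≤ C)
    (hx : ∀ z ∈ ball (0 : ℂ) 1, HasSum (fun n : ℕ => x n * z ^ n) (f z))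
    (a : lp (fun _ : ℕ => ℂ) 2) :
    Summable (fun n : ℕ => ‖∑ k ∈ Finset.range (n + 1), x k * a (n - k)‖ ^ 2) ∧
    Real.sqrt (∑' n : ℕ, ‖∑ k ∈ Finset.range (n + 1), x k * a (n - k)‖ ^ 2) ≤
      (⨆ z ∈ ball (0 : ℂ) 1, ‖f z‖) * ‖a‖ := by
  obtain ⟨C, hC⟩ := hfb
  set M := ⨆ z ∈ ball (0 : ℂ) 1, ‖f z‖
  have hfM (z : ℂ) (hz : z ∈ ball (0 : ℂ) 1) : ‖f z‖ ≤ M :=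
    le_ciSup₂ (f := fun z (_ : z ∈ ball (0 : ℂ) 1) => ‖f z‖)
      ⟨C, by simpa [upperBounds] using hC⟩ z hz
  have hM : 0 ≤ M := (norm_nonneg _).trans (hfM 0 (mem_ball_self one_pos))
  obtain ⟨hsum, htsum_le⟩ := summable_and_tsum_le_of_sum_range_pow_smul_le
    (b := cauchyProduct x a) fun r hr N => sum_range_norm_sq_pow_smul_cauchyProduct_le hfM hx a hr N
  exact ⟨hsum, Real.sqrt_le_iff.mpr ⟨by positivity, by rwa [mul_pow]⟩⟩

/-- If `f` is bounded holomorphic on the unit disk with Taylor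
coefficients `(xₙ)` and `a ∈ ℓ²(ℕ, ℂ)`, then the Cauchy product
`b(n) = ∑_{k=0}^n xₖ a(n−k)` is square-summable with
`‖b‖₂ ≤ (sup_𝔻 |f|) · ‖a‖₂`; i.e. the transfer-function operator `f(L)` is a
well-defined bounded operator of norm at most `sup_𝔻 |f|`. -/
theorem cauchy_product_with_Hinfty_coeffs_bounded
    (f : ℂ → ℂ) (x : ℕ → ℂ)
    (hf : DifferentiableOn ℂ f (ball (0 : ℂ) 1))
    (hfb : ∃ C : ℝ, ∀ z ∈ ball (0 : ℂ) 1, ‖f z‖ ≤ C)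
    (hx : ∀ z ∈ ball (0 : ℂ) 1, HasSum (fun n : ℕ => x n * z ^ n) (f z))
    (a : lp (fun _ : ℕ => ℂ) 2) :
    Summable (fun n : ℕ => ‖∑ k ∈ Finset.range (n + 1), x k * a (n - k)‖ ^ 2) ∧
    Real.sqrt (∑' n : ℕ, ‖∑ k ∈ Finset.range (n + 1), x k * a (n - k)‖ ^ 2) ≤
      (⨆ z ∈ ball (0 : ℂ) 1, ‖f z‖) * ‖a‖ :=
  cauchy_product_with_Hinfty_coeffs_bounded_general f x hfb hx a
end

section
/- For the transfer function x(z) = log(1 + z/2) (principal logarithm), the non-Padé rational approximation is a strictly better sup-norm approximation on the unit circle than the Padé (1,1) approximation: sup_{|z|=1} | log(1 + z/2) − (z/1.98)/(1 + z/3.96) | < sup_{|z|=1} | log(1 + z/2) − (z/2)/(1 + z/4) |. Consequently, by the spectral lemma, the ARMA(1,1) model with transfer function (z/1.98)/(1 + z/3.96) is a better L² approximation bound for the stationary process X_t = ∑_{n=0}^∞ (−1)ⁿ ε_{t−n}/(2ⁿ(n+1)) than the Padé-derived ARMA(1,1) model with transfer function (z/2)/(1 + z/4); Padé approximations do not always yield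 the best ARMA models. -/
/-!
At `z = -1` the Padé error already equals `log 2 - 2/3 > 0.0264`, whereas the non-Padé error
`E(z) = ∑ dₙ zⁿ` stays below `0.0248` on the whole unit circle. To see the latter, round
`d₁, …, d₆` to four decimals: the modulus squared of the resulting polynomial on the circle is a
quintic in `Re z` that is bounded on `[-1, 1]`, and the rounding error together with the tail
`n ≥ 7` is controlled by the sum of the moduli of the coefficients.

For the `L²` bound, uniqueness of power series identifies `x - y₂` with `d`. The `dₙ` are the
Fourier coefficients of `θ ↦ E(e^{iθ})`, so Bessel's inequality gives
`∑ |dₙ|² ≤ ‖E‖²_{L²} ≤ (sup_{|z|=1} |E z|)²`.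
-/

open Metric AddCircle MeasureTheory

lemma hasFPowerSeriesOnBall_ofScalars_of_hasSum {c : ℕ → ℂ} {f : ℂ → ℂ} {r : NNReal}
    (hr : 0 < r) (hf : ∀ z ∈ ball (0 : ℂ) r, HasSum (fun n => c n * z ^ n) (f z)) :
    HasFPowerSeriesOnBall f (.ofScalars ℂ c) 0 r where
  r_le := by
    refine le_of_forall_lt_imp_le_of_dense fun s hs => ?_
    lift s to NNReal using hs.ne_top
    apply FormalMultilinearSeries.le_radius_of_summable
    simpa [norm_mul] using (hf s (by simpa using hs)).summable.norm
  r_pos := by simpa using hr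
  hasSum {y} hy := by
    rw [Metric.eball_coe] at hy
    simpa [FormalMultilinearSeries.ofScalars_apply_eq, mul_comm] using hf y hy

theorem eq_of_hasSum_mul_pow {c d : ℕ → ℂ} {f : ℂ → ℂ} {r : ℝ} (hr : 0 < r)
    (hc : ∀ z ∈ ball (0 : ℂ) r, HasSum (fun n => c n * z ^ n) (f z))
    (hd : ∀ z ∈ ball (0 : ℂ) r, HasSum (fun n => d n * z ^ n) (f z)) : c = d := by
  lift r to NNReal using hr.le
  exact FormalMultilinearSeries.ofScalars_series_injective (𝕜 := ℂ) (E := ℂ)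
    ((hasFPowerSeriesOnBall_ofScalars_of_hasSum hr hc).hasFPowerSeriesAt.eq_formalMultilinearSeries
      (hasFPowerSeriesOnBall_ofScalars_of_hasSum hr hd).hasFPowerSeriesAt)

section UnitDisk

variable {c : ℕ → ℂ} {z w : ℂ}

lemma norm_mul_pow_le {a : ℂ} (hz : ‖z‖ ≤ 1) (n : ℕ) : ‖a * z ^ n‖ ≤ ‖a‖ := by
  rw [norm_mul, norm_pow]
  exact mul_le_of_le_one_right (norm_nonneg _) (pow_le_one₀ (norm_nonneg _) hz)

lemma norm_le_tsum_norm_of_hasSum (hz : ‖z‖ ≤ 1) (hw : HasSum (fun n => c n * z ^ n) w)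
    (hc : Summable fun n => ‖c n‖) : ‖w‖ ≤ ∑' n, ‖c n‖ :=
  hw.norm_le_of_bounded hc.hasSum fun n => norm_mul_pow_le hz n

lemma norm_sub_sum_le {q : ℕ → ℂ} (N : ℕ) (hz : ‖z‖ ≤ 1)
    (hw : HasSum (fun n => c n * z ^ n) w) (hc : Summable fun n => ‖c n‖) :
    ‖w - ∑ n ∈ Finset.range N, q n * z ^ n‖ ≤
      ∑ n ∈ Finset.range N, ‖c n - q n‖ + ∑' n, ‖c (n + N)‖ := by
  have htail : ‖w - ∑ n ∈ Finset.range N, c n * z ^ n‖ ≤ ∑' n, ‖c (n + N)‖ :=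
    ((hasSum_nat_add_iff' N).2 hw).norm_le_of_bounded ((summable_nat_add_iff N).2 hc).hasSum
      fun n => norm_mul_pow_le hz _
  have hhead : ‖∑ n ∈ Finset.range N, c n * z ^ n - ∑ n ∈ Finset.range N, q n * z ^ n‖ ≤
      ∑ n ∈ Finset.range N, ‖c n - q n‖ := by
    rw [← Finset.sum_sub_distrib]
    exact norm_sum_le_of_le _ fun n _ => by rw [← sub_mul]; exact norm_mul_pow_le hz n
  rw [← sub_add_sub_cancel w (∑ n ∈ Finset.range N, c n * z ^ n), add_comm]
  exact (norm_add_le _ _).trans (add_le_add hhead htail)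

lemma bddAbove_norm_of_hasSum_sphere {f : ℂ → ℂ} (hc : Summable fun n => ‖c n‖)
    (hf : ∀ z ∈ sphere (0 : ℂ) 1, HasSum (fun n => c n * z ^ n) (f z)) :
    BddAbove (Set.range fun z : sphere (0 : ℂ) 1 => ‖f z‖) :=
  ⟨∑' n, ‖c n‖, by
    rintro _ ⟨z, rfl⟩
    exact norm_le_tsum_norm_of_hasSum (by simp) (hf z z.2) hc⟩

end UnitDisk

section Fourier

variable {T : ℝ} [Fact (0 < T)]

lemma summable_smul_fourier {c : ℕ → ℂ} (hc : Summable fun n => ‖c n‖) :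
    Summable fun n : ℕ => c n • fourier (T := T) n :=
  Summable.of_norm (by simpa [norm_smul, fourier_norm] using hc)

lemma inner_fourierLp_toLp_tsum_smul_fourier {c : ℕ → ℂ} (hc : Summable fun n => ‖c n‖)
    (n : ℕ) :
    inner ℂ (fourierLp (T := T) 2 n)
      (ContinuousMap.toLp 2 haarAddCircle ℂ (∑' m : ℕ, c m • fourier (T := T) m)) = c n := by
  have hterm (m : ℕ) : inner ℂ (fourierLp (T := T) 2 n)
      (ContinuousMap.toLp 2 haarAddCircle ℂ (c m • fourier (T := T) m)) =
      if m = n then c n else 0 := by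
    rw [map_smul, inner_smul_right, orthonormal_iff_ite.mp orthonormal_fourier]
    split_ifs <;> simp_all
  have h := ((innerSL ℂ (fourierLp (T := T) 2 n)).comp
    (ContinuousMap.toLp 2 haarAddCircle ℂ)).hasSum (summable_smul_fourier hc).hasSum
  simp only [ContinuousLinearMap.comp_apply, innerSL_apply_apply, hterm] at h
  exact h.unique (hasSum_ite_eq n (c n))

lemma norm_toLp_le_norm (G : C(AddCircle T, ℂ)) :
    ‖ContinuousMap.toLp 2 haarAddCircle ℂ G‖ ≤ ‖G‖ := by
  simpa [measureUnivNNReal] using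
    (ContinuousMap.toLp (E := ℂ) 2 (haarAddCircle (T := T)) ℂ).le_of_opNorm_le
      (ContinuousMap.toLp_norm_le _) G

end Fourier

theorem tsum_sq_norm_le_of_hasSum_sphere {c : ℕ → ℂ} {f : ℂ → ℂ} {S : ℝ}
    (hc : Summable fun n => ‖c n‖)
    (hf : ∀ z ∈ sphere (0 : ℂ) 1, HasSum (fun n => c n * z ^ n) (f z))
    (hS : ∀ z ∈ sphere (0 : ℂ) 1, ‖f z‖ ≤ S) :
    ∑' n, ‖c n‖ ^ 2 ≤ S ^ 2 := by
  have : Fact ((0 : ℝ) < 1) := ⟨one_pos⟩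
  set G : C(AddCircle (1 : ℝ), ℂ) := ∑' m : ℕ, c m • fourier m
  set g := ContinuousMap.toLp 2 haarAddCircle ℂ G
  have hG (t : AddCircle (1 : ℝ)) : G t = f (toCircle t) := by
    refine ((ContinuousMap.evalCLM ℂ t).hasSum (summable_smul_fourier hc).hasSum).unique ?_
    simpa [fourier_apply, toCircle_nsmul] using hf (toCircle t) (by simp [Circle.norm_coe])
  have hS₀ : 0 ≤ S := (norm_nonneg _).trans (hS 1 (by simp))
  have hGS : ‖G‖ ≤ S :=
    (ContinuousMap.norm_le _ hS₀).2 fun t => hG t ▸ hS _ (by simp [Circle.norm_coe])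
  calc ∑' n : ℕ, ‖c n‖ ^ 2 = ∑' n : ℕ, ‖inner ℂ (fourierLp 2 (n : ℤ)) g‖ ^ 2 := by
        simp only [g, G, inner_fourierLp_toLp_tsum_smul_fourier hc]
    _ ≤ ∑' i : ℤ, ‖inner ℂ (fourierLp 2 i) g‖ ^ 2 :=
        tsum_comp_le_tsum_of_inj (Orthonormal.inner_products_summable g orthonormal_fourier)
          (fun _ => by positivity) Nat.cast_injective
    _ ≤ ‖g‖ ^ 2 := orthonormal_fourier.tsum_inner_products_le g
    _ ≤ S ^ 2 := pow_le_pow_left₀ (norm_nonneg _) ((norm_toLp_le_norm G).trans hGS) 2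

noncomputable def logCoeff (b : ℝ) (n : ℕ) : ℝ := (-1) ^ (n + 1) / (n * b ^ n)

noncomputable def rationalCoeff (a b : ℝ) : ℕ → ℝ
  | 0 => 0
  | n + 1 => a⁻¹ * (-b⁻¹) ^ n

lemma hasSum_logCoeff {b : ℝ} {z : ℂ} (hz : ‖z‖ < |b|) :
    HasSum (fun n => (logCoeff b n : ℂ) * z ^ n) (Complex.log (1 + z / b)) := by
  have hzb : ‖z / b‖ < 1 := by
    rwa [norm_div, Complex.norm_real, Real.norm_eq_abs, div_lt_one ((norm_nonneg z).trans_lt hz)]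
  convert Complex.hasSum_taylorSeries_log hzb using 2 with n
  push_cast [logCoeff]
  ring

lemma abs_logCoeff (b : ℝ) (n : ℕ) : |logCoeff b n| = (n * |b| ^ n)⁻¹ := by
  simp [logCoeff, abs_div, abs_mul, abs_pow]

lemma summable_abs_logCoeff {b : ℝ} (hb : 1 < |b|) : Summable fun n => |logCoeff b n| := by
  refine Summable.of_nonneg_of_le (fun _ => abs_nonneg _) (fun n => ?_)
    (summable_geometric_of_lt_one (by positivity) (inv_lt_one_of_one_lt₀ hb))
  rw [abs_logCoeff, inv_pow]
  rcases n with _ | n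
  · simp
  · exact inv_anti₀ (by positivity) (le_mul_of_one_le_left (by positivity) (by simp))

lemma hasSum_rationalCoeff {a b : ℝ} {z : ℂ} (hz : ‖z‖ < |b|) :
    HasSum (fun n => (rationalCoeff a b n : ℂ) * z ^ n) (z / a / (1 + z / b)) := by
  have hzb : ‖-z / b‖ < 1 := by
    rwa [norm_div, norm_neg, Complex.norm_real, Real.norm_eq_abs,
      div_lt_one ((norm_nonneg z).trans_lt hz)]
  have hgeom := (hasSum_geometric_of_norm_lt_one hzb).mul_left (z / a)
  rw [neg_div, sub_neg_eq_add, ← div_eq_mul_inv] at hgeom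
  have hterm (n : ℕ) :
      (rationalCoeff a b (n + 1) : ℂ) * z ^ (n + 1) = z / a * (-(z / b)) ^ n := by
    push_cast [rationalCoeff]
    ring
  refine (hasSum_nat_add_iff' 1).1 ?_
  simpa only [hterm, Finset.sum_range_one, rationalCoeff.eq_1, Complex.ofReal_zero, zero_mul,
    sub_zero] using hgeom

lemma abs_rationalCoeff_succ (a b : ℝ) (n : ℕ) :
    |rationalCoeff a b (n + 1)| = |a|⁻¹ * |b|⁻¹ ^ n := by
  simp [rationalCoeff, abs_mul, abs_pow]

lemma summable_abs_rationalCoeff (a : ℝ) {b : ℝ} (hb : 1 < |b|) :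
    Summable fun n => |rationalCoeff a b n| := by
  refine (summable_nat_add_iff 1).1 ?_
  simp_rw [abs_rationalCoeff_succ]
  exact (summable_geometric_of_lt_one (by positivity) (inv_lt_one_of_one_lt₀ hb)).mul_left _

lemma hasSum_log_sub_rational {a b c : ℝ} {z : ℂ} (hb : ‖z‖ < |b|) (hc : ‖z‖ < |c|) :
    HasSum (fun n => ((logCoeff b n - rationalCoeff a c n : ℝ) : ℂ) * z ^ n)
      (Complex.log (1 + z / b) - z / a / (1 + z / c)) := by
  simpa only [Complex.ofReal_sub, sub_mul] using (hasSum_logCoeff hb).sub (hasSum_rationalCoeff hc)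

lemma summable_norm_log_sub_rational (a : ℝ) {b c : ℝ} (hb : 1 < |b|) (hc : 1 < |c|) :
    Summable fun n => ‖((logCoeff b n - rationalCoeff a c n : ℝ) : ℂ)‖ := by
  simp only [Complex.norm_real, Real.norm_eq_abs]
  exact Summable.of_nonneg_of_le (fun _ => abs_nonneg _) (fun _ => abs_sub _ _)
    ((summable_abs_logCoeff hb).add (summable_abs_rationalCoeff a hc))

lemma hasSum_padeError {z : ℂ} (hz : ‖z‖ ≤ 1) :
    HasSum (fun n => ((logCoeff 2 n - rationalCoeff 2 4 n : ℝ) : ℂ) * z ^ n)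
      (Complex.log (1 + z / 2) - z / 2 / (1 + z / 4)) := by
  exact_mod_cast hasSum_log_sub_rational (a := 2) (b := 2) (c := 4)
    (by rw [abs_two]; linarith) (by norm_num; linarith)

lemma norm_padeError_neg_one :
    ‖Complex.log (1 + (-1) / 2) - (-1) / 2 / (1 + (-1) / 4)‖ = Real.log 2 - 2 / 3 := by
  have h₁ : (1 + (-1) / 2 : ℂ) = ((2⁻¹ : ℝ) : ℂ) := by norm_num
  have h₂ : ((-1) / 2 / (1 + (-1) / 4) : ℂ) = ((-(2 / 3) : ℝ) : ℂ) := by norm_num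
  rw [h₁, h₂, ← Complex.ofReal_log (by norm_num), Real.log_inv, ← Complex.ofReal_sub,
    Complex.norm_real, Real.norm_eq_abs, abs_of_neg (by linarith [Real.log_two_gt_d9])]
  ring

noncomputable def nonPadeErrorCoeff (n : ℕ) : ℝ := logCoeff 2 n - rationalCoeff 1.98 3.96 n

lemma hasSum_nonPadeError {z : ℂ} (hz : ‖z‖ ≤ 1) :
    HasSum (fun n => (nonPadeErrorCoeff n : ℂ) * z ^ n)
      (Complex.log (1 + z / 2) - z / 1.98 / (1 + z / 3.96)) := by
  exact_mod_cast hasSum_log_sub_rational (a := 1.98) (b := 2) (c := 3.96)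
    (by rw [abs_two]; linarith) (by norm_num; linarith)

lemma summable_norm_nonPadeErrorCoeff : Summable fun n => ‖(nonPadeErrorCoeff n : ℂ)‖ :=
  summable_norm_log_sub_rational 1.98 (by norm_num) (by norm_num)

-- `nonPadeErrorCoeff 1, …, nonPadeErrorCoeff 6` rounded to four decimals.
noncomputable def roundedErrorCoeff : ℕ → ℝ
  | 1 => -51 / 10000
  | 2 => 25 / 10000
  | 3 => 95 / 10000
  | 4 => -75 / 10000
  | 5 => 42 / 10000
  | 6 => -21 / 10000
  | _ => 0

lemma sum_abs_nonPadeErrorCoeff_sub_rounded_le :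
    ∑ n ∈ Finset.range 7, |nonPadeErrorCoeff n - roundedErrorCoeff n| ≤ 2 / 10000 := by
  norm_num [Finset.sum_range_succ, nonPadeErrorCoeff, logCoeff, rationalCoeff, roundedErrorCoeff,
    abs_of_pos, abs_of_neg]

lemma abs_nonPadeErrorCoeff_add_seven_le (n : ℕ) :
    |nonPadeErrorCoeff (n + 7)| ≤ 13 / 10000 * (1 / 2) ^ n := by
  have hlog : |logCoeff 2 (n + 7)| ≤ 1 / 896 * (1 / 2) ^ n := by
    rw [abs_logCoeff, abs_two]
    calc ((↑(n + 7) : ℝ) * 2 ^ (n + 7))⁻¹ ≤ (7 * 2 ^ (n + 7))⁻¹ :=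
          inv_anti₀ (by positivity) (by gcongr; push_cast; linarith)
      _ = 1 / 896 * (1 / 2) ^ n := by rw [one_div_pow, pow_add]; field_simp; norm_num
  have hrat : |rationalCoeff 1.98 3.96 (n + 7)| ≤ 15 / 100000 * (1 / 2) ^ n := by
    rw [abs_rationalCoeff_succ, pow_add, abs_of_pos (by norm_num : (0 : ℝ) < 1.98),
      abs_of_pos (by norm_num : (0 : ℝ) < 3.96)]
    have hgeom : (3.96 : ℝ)⁻¹ ^ n ≤ (1 / 2) ^ n := by gcongr; norm_num
    have hconst : (1.98 : ℝ)⁻¹ * (3.96 : ℝ)⁻¹ ^ 6 ≤ 15 / 100000 := by norm_num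
    calc (1.98 : ℝ)⁻¹ * ((3.96 : ℝ)⁻¹ ^ n * (3.96 : ℝ)⁻¹ ^ 6)
        = (1.98 : ℝ)⁻¹ * (3.96 : ℝ)⁻¹ ^ 6 * (3.96 : ℝ)⁻¹ ^ n := by ring
      _ ≤ _ := by gcongr
  calc _ ≤ |logCoeff 2 (n + 7)| + |rationalCoeff 1.98 3.96 (n + 7)| := abs_sub _ _
    _ ≤ _ := by linarith [pow_nonneg (by norm_num : (0 : ℝ) ≤ 1 / 2) n]

lemma tsum_abs_nonPadeErrorCoeff_add_seven_le :
    ∑' n, |nonPadeErrorCoeff (n + 7)| ≤ 13 / 5000 := by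
  have hg := hasSum_geometric_two.mul_left (13 / 10000 : ℝ)
  calc _ ≤ ∑' n : ℕ, 13 / 10000 * (1 / 2 : ℝ) ^ n :=
        Summable.tsum_le_tsum abs_nonPadeErrorCoeff_add_seven_le
          (Summable.of_nonneg_of_le (fun _ => abs_nonneg _) abs_nonPadeErrorCoeff_add_seven_le
            hg.summable) hg.summable
    _ = 13 / 5000 := by rw [hg.tsum_eq]; norm_num

def errorQuintic (z : ℂ) : ℂ := -51 + 25 * z + 95 * z ^ 2 - 75 * z ^ 3 + 42 * z ^ 4 - 21 * z ^ 5

lemma sum_roundedErrorCoeff_mul_pow (z : ℂ) :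
    ∑ n ∈ Finset.range 7, (roundedErrorCoeff n : ℂ) * z ^ n = z * errorQuintic z / 10000 := by
  simp only [Finset.sum_range_succ, Finset.sum_range_zero, roundedErrorCoeff, errorQuintic]
  push_cast
  ring

def errorQuinticNormSq (u : ℝ) : ℝ :=
  17057 - 26684 * u + 38052 * u ^ 2 - 19800 * u ^ 3 - 42672 * u ^ 4 + 34272 * u ^ 5

lemma normSq_errorQuintic {u v : ℝ} (h : u ^ 2 + v ^ 2 = 1) :
    Complex.normSq (errorQuintic (u + v * Complex.I)) = errorQuinticNormSq u := by
  have hv : v ^ 2 = 1 - u ^ 2 := by linarith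
  simp only [errorQuintic, errorQuinticNormSq, Complex.normSq_apply, Complex.add_re,
    Complex.add_im, Complex.sub_re, Complex.sub_im, Complex.mul_re, Complex.mul_im, Complex.I_re,
    Complex.I_im, Complex.ofReal_re, Complex.ofReal_im, Complex.re_ofNat, Complex.im_ofNat,
    Complex.one_re, Complex.one_im, Complex.neg_re, Complex.neg_im, pow_succ, pow_zero]
  ring_nf
  rw [show v ^ 10 = (v ^ 2) ^ 5 by ring, show v ^ 8 = (v ^ 2) ^ 4 by ring,
    show v ^ 6 = (v ^ 2) ^ 3 by ring, show v ^ 4 = (v ^ 2) ^ 2 by ring, hv]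
  ring

lemma errorQuinticNormSq_le {u : ℝ} (hu : u ∈ Set.Icc (-1 : ℝ) 1) :
    errorQuinticNormSq u ≤ 220 ^ 2 := by
  have hI : 0 ≤ (u + 1) * (1 - u) := by nlinarith [hu.1, hu.2]
  unfold errorQuinticNormSq
  nlinarith [mul_nonneg hI (sq_nonneg (u + 3 / 4)),
    mul_nonneg hI (sq_nonneg (u ^ 2 + u / 2 - 1 / 4))]

lemma norm_errorQuintic_le {z : ℂ} (hz : ‖z‖ = 1) : ‖errorQuintic z‖ ≤ 220 := by
  have hre : z.re ^ 2 + z.im ^ 2 = 1 := by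
    have h := Complex.normSq_eq_norm_sq z
    rw [Complex.normSq_apply, hz] at h
    linarith
  have hu : z.re ∈ Set.Icc (-1 : ℝ) 1 := abs_le.1 (hz ▸ Complex.abs_re_le_norm z)
  refine le_of_pow_le_pow_left₀ two_ne_zero (by norm_num) ?_
  rw [Complex.sq_norm, ← Complex.re_add_im z, normSq_errorQuintic hre]
  exact errorQuinticNormSq_le hu

lemma norm_nonPadeError_le {z : ℂ} (hz : ‖z‖ = 1) :
    ‖Complex.log (1 + z / 2) - z / 1.98 / (1 + z / 3.96)‖ ≤ 0.0248 := by
  have htrunc := norm_sub_sum_le (q := fun n => (roundedErrorCoeff n : ℂ)) 7 hz.le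
    (hasSum_nonPadeError hz.le) summable_norm_nonPadeErrorCoeff
  simp only [← Complex.ofReal_sub, Complex.norm_real, Real.norm_eq_abs] at htrunc
  have hround : ‖∑ n ∈ Finset.range 7, (roundedErrorCoeff n : ℂ) * z ^ n‖ ≤ 220 / 10000 := by
    rw [sum_roundedErrorCoeff_mul_pow, norm_div, norm_mul, hz, one_mul, Complex.norm_ofNat]
    gcongr
    exact norm_errorQuintic_le hz
  linarith [norm_le_insert' (Complex.log (1 + z / 2) - z / 1.98 / (1 + z / 3.96))
    (∑ n ∈ Finset.range 7, (roundedErrorCoeff n : ℂ) * z ^ n),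
    sum_abs_nonPadeErrorCoeff_sub_rounded_le, tsum_abs_nonPadeErrorCoeff_add_seven_le]

theorem non_pade_beats_pade_for_log_transfer_function_general
    (x y₂ : ℕ → ℂ)
    (hx : ∀ z ∈ ball (0 : ℂ) 1,
      HasSum (fun n : ℕ => x n * z ^ n) (Complex.log (1 + z / 2)))
    (hy₂ : ∀ z ∈ ball (0 : ℂ) 1,
      HasSum (fun n : ℕ => y₂ n * z ^ n) ((z / 1.98) / (1 + z / 3.96))) :
    (⨆ z : sphere (0 : ℂ) 1,
        ‖Complex.log (1 + (z : ℂ) / 2) - ((z : ℂ) / 1.98) / (1 + (z : ℂ) / 3.96)‖) <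
      (⨆ z : sphere (0 : ℂ) 1,
        ‖Complex.log (1 + (z : ℂ) / 2) - ((z : ℂ) / 2) / (1 + (z : ℂ) / 4)‖) ∧
    Real.sqrt (∑' n : ℕ, ‖x n - y₂ n‖ ^ 2) ≤
      ⨆ z : sphere (0 : ℂ) 1,
        ‖Complex.log (1 + (z : ℂ) / 2) - ((z : ℂ) / 1.98) / (1 + (z : ℂ) / 3.96)‖ := by
  have hpade := fun z (hz : z ∈ sphere (0 : ℂ) 1) =>
    hasSum_padeError (mem_sphere_zero_iff_norm.1 hz).le
  have hnonPade := fun z (hz : z ∈ sphere (0 : ℂ) 1) =>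
    hasSum_nonPadeError (mem_sphere_zero_iff_norm.1 hz).le
  have hbdd₁ := bddAbove_norm_of_hasSum_sphere
    (summable_norm_log_sub_rational 2 (by norm_num) (by norm_num)) hpade
  have hbdd₂ := bddAbove_norm_of_hasSum_sphere summable_norm_nonPadeErrorCoeff hnonPade
  refine ⟨?_, ?_⟩
  · calc _ ≤ (0.0248 : ℝ) := ciSup_le fun z => norm_nonPadeError_le (by simp)
      _ < Real.log 2 - 2 / 3 := by linarith [Real.log_two_gt_d9]
      _ = _ := norm_padeError_neg_one.symm
      _ ≤ _ := le_ciSup hbdd₁ ⟨-1, by simp⟩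
  · obtain rfl : x = fun n => (logCoeff 2 n : ℂ) := eq_of_hasSum_mul_pow one_pos hx
      fun z hz => hasSum_logCoeff (by rw [abs_two]; linarith [mem_ball_zero_iff.1 hz])
    obtain rfl : y₂ = fun n => (rationalCoeff 1.98 3.96 n : ℂ) := eq_of_hasSum_mul_pow one_pos hy₂
      fun z hz => by
        exact_mod_cast hasSum_rationalCoeff (a := 1.98) (b := 3.96)
          (by rw [abs_of_pos (by norm_num)]; linarith [mem_ball_zero_iff.1 hz])
    rw [Real.sqrt_le_left (Real.iSup_nonneg fun _ => norm_nonneg _)]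
    simp only [← Complex.ofReal_sub]
    exact tsum_sq_norm_le_of_hasSum_sphere summable_norm_nonPadeErrorCoeff hnonPade
      fun z hz => le_ciSup hbdd₂ ⟨z, hz⟩

/-- For the transfer function `log(1 + z/2)`, the non-Padé rational
approximant `(z/1.98)/(1 + z/3.96)` is a strictly better sup-norm approximation on the
unit circle than the Padé (1,1) approximant `(z/2)/(1 + z/4)`; consequently (via the
spectral lemma) the non-Padé ARMA(1,1) model gives a better L² approximation bound for
the associated stationary process than the Padé-derived one: Padé approximations do not
always yield the best ARMA models. -/
theorem non_pade_beats_pade_for_log_transfer_function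
    (x y₁ y₂ : ℕ → ℂ)
    (hx : ∀ z ∈ ball (0 : ℂ) 1,
      HasSum (fun n : ℕ => x n * z ^ n) (Complex.log (1 + z / 2)))
    (hy₁ : ∀ z ∈ ball (0 : ℂ) 1,
      HasSum (fun n : ℕ => y₁ n * z ^ n) ((z / 2) / (1 + z / 4)))
    (hy₂ : ∀ z ∈ ball (0 : ℂ) 1,
      HasSum (fun n : ℕ => y₂ n * z ^ n) ((z / 1.98) / (1 + z / 3.96))) :
    (⨆ z : sphere (0 : ℂ) 1,
        ‖Complex.log (1 + (z : ℂ) / 2) - ((z : ℂ) / 1.98) / (1 + (z : ℂ) / 3.96)‖) <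
      (⨆ z : sphere (0 : ℂ) 1,
        ‖Complex.log (1 + (z : ℂ) / 2) - ((z : ℂ) / 2) / (1 + (z : ℂ) / 4)‖) ∧
    Real.sqrt (∑' n : ℕ, ‖x n - y₂ n‖ ^ 2) ≤
      ⨆ z : sphere (0 : ℂ) 1,
        ‖Complex.log (1 + (z : ℂ) / 2) - ((z : ℂ) / 1.98) / (1 + (z : ℂ) / 3.96)‖ :=
  non_pade_beats_pade_for_log_transfer_function_general x y₂ hx hy₂
end
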